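/- Let r be a positive integer all of whose prime factors p satisfy p ≡ 1 (mod 6), let k be an integer with r dividing 1 + k + k², and let m be a positive integer. Then the subgroup of GL(3,ℂ) generated by B_{r,k} and E_m (this is the group T_r^{(k)}(m)) has order 3^m·r. -/

import Mathlib

open Matrix

/-- The matrix `B_{n,k} = diag(ν, ν^k, ν^{−1−k})` with `ν = exp(2πi/n)`. -/
noncomputable def Bmatrix (n : ℕ) (k : ℤ) : Matrix (Fin 3) (Fin 3) ℂ :=
  Matrix.diagonal ![Complex.exp (2 * (Real.pi : ℂ) * Complex.I / (n : ℂ)),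
    Complex.exp (2 * (Real.pi : ℂ) * Complex.I / (n : ℂ)) ^ k,
    Complex.exp (2 * (Real.pi : ℂ) * Complex.I / (n : ℂ)) ^ (-1 - k)]

/-- The matrix `E_m`, with entries `μ = exp(2πi/3^m)` in positions `(0,1)`, `(1,2)`, `(2,0)`
and `0` elsewhere. -/
noncomputable def EMmatrix (m : ℕ) : Matrix (Fin 3) (Fin 3) ℂ :=
  Complex.exp (2 * (Real.pi : ℂ) * Complex.I / ((3 : ℂ) ^ m)) •
    (!![0, 1, 0; 0, 0, 1; 1, 0, 0] : Matrix (Fin 3) (Fin 3) ℂ)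

/-!
`B` has order `r` and `E_m`, a scalar multiple of the cyclic permutation matrix, has order `3^m`.
Conjugating by the permutation matrix rotates the diagonal entries of `B`, and since `ν` has
order `r` and `r ∣ 1 + k + k²` the rotated matrix is `B^k`; hence `⟨E_m⟩` normalises `⟨B⟩` and the group is
the product set `⟨B⟩⟨E_m⟩`. The two cyclic factors meet trivially because `3 ∤ r` makes their
orders coprime, so the group has exactly `r · 3^m` elements.
-/

namespace Subgroup

variable {G : Type*} [Group G]

theorem natCard_sup_eq_mul_of_le_normalizer {N H : Subgroup G} (hH : H ≤ normalizer (N : Set G))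
    (hNH : Disjoint N H) : Nat.card ↥(N ⊔ H) = Nat.card N * Nat.card H := by
  rw [← Nat.card_prod]
  refine (Nat.card_eq_of_bijective
    (fun p : N × H => (⟨p.1 * p.2, mul_mem_sup p.1.2 p.2.2⟩ : ↥(N ⊔ H))) ⟨?_, ?_⟩).symm
  · rintro ⟨⟨n, hn⟩, ⟨h, hh⟩⟩ ⟨⟨n', hn'⟩, ⟨h', hh'⟩⟩ heq
    have hmul : n * h = n' * h' := congrArg Subtype.val heq
    have hmem : n'⁻¹ * n ∈ N ⊓ H := mem_inf.mpr ⟨mul_mem (inv_mem hn') hn, by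
      rw [show n'⁻¹ * n = h' * h⁻¹ by rw [inv_mul_eq_iff_eq_mul, ← mul_assoc, ← hmul]; group]
      exact mul_mem hh' (inv_mem hh)⟩
    rw [disjoint_iff.mp hNH, mem_bot, inv_mul_eq_one] at hmem
    subst hmem
    obtain rfl := mul_left_cancel hmul
    rfl
  · rintro ⟨x, hx⟩
    rw [← SetLike.mem_coe, coe_mul_of_right_le_normalizer_left N H hH] at hx
    obtain ⟨n, hn, h, hh, rfl⟩ := hx
    exact ⟨(⟨n, hn⟩, ⟨h, hh⟩), rfl⟩

theorem natCard_closure_pair_of_conj_eq_zpow {x g : G} {k : ℤ} (hx : IsOfFinOrder x)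
    (hconj : g * x * g⁻¹ = x ^ k) (hcop : (orderOf x).Coprime (orderOf g)) :
    Nat.card (closure {x, g}) = orderOf x * orderOf g := by
  have : Finite (zpowers x : Set G) := hx.finite_zpowers
  have hnorm : zpowers g ≤ normalizer (zpowers x : Set G) := by
    rw [zpowers_le]
    refine mem_normalizer_fintype ?_
    rintro _ ⟨a, rfl⟩
    exact ⟨k * a, by simp only [_root_.zpow_mul, ← hconj, conj_zpow]⟩
  rw [Set.insert_eq, closure_union, ← zpowers_eq_closure, ← zpowers_eq_closure,
    natCard_sup_eq_mul_of_le_normalizer hnorm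
      (disjoint_of_coprime_natCard (by simpa only [Nat.card_zpowers])),
    Nat.card_zpowers, Nat.card_zpowers]

end Subgroup

namespace Matrix

variable {R : Type*} [CommRing R]

def diagTwist (k : ℤ) : Rˣ →* GL (Fin 3) R :=
  (Units.map (diagonalRingHom (Fin 3) R).toMonoidHom).comp <|
    MulEquiv.piUnits.symm.toMonoidHom.comp <|
      MonoidHom.pi fun i => zpowGroupHom (![1, k, -1 - k] i)

theorem coe_diagTwist (k : ℤ) (u : Rˣ) :
    (diagTwist k u : Matrix (Fin 3) (Fin 3) R) =
      diagonal ![(u : R), ↑(u ^ k), ↑(u ^ (-1 - k))] := by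
  ext i j
  fin_cases i <;> fin_cases j <;> simp [diagTwist]

theorem diagTwist_injective (k : ℤ) : Function.Injective (diagTwist (R := R) k) := fun u v h =>
  Units.ext <| by simpa [coe_diagTwist] using congrArg (fun g : GL (Fin 3) R => g.val 0 0) h

theorem orderOf_diagTwist (k : ℤ) (u : Rˣ) : orderOf (diagTwist k u) = orderOf u :=
  orderOf_injective _ (diagTwist_injective k) u

def cyclicShift : Matrix (Fin 3) (Fin 3) R := !![0, 1, 0; 0, 0, 1; 1, 0, 0]

theorem cyclicShift_pow_three : (cyclicShift : Matrix (Fin 3) (Fin 3) R) ^ 3 = 1 := by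
  ext i j
  fin_cases i <;> fin_cases j <;> simp [cyclicShift, pow_succ, mul_apply, Fin.sum_univ_three]

theorem cyclicShift_mul_diagonal (a b c : R) :
    cyclicShift * diagonal ![a, b, c] = diagonal ![b, c, a] * cyclicShift := by
  ext i j
  fin_cases i <;> fin_cases j <;> simp [cyclicShift, mul_apply, Fin.sum_univ_three]

theorem cyclicShift_mul_diagTwist {k : ℤ} {u : Rˣ} (hu : u ^ (1 + k + k ^ 2) = 1) :
    cyclicShift * (diagTwist k u : Matrix (Fin 3) (Fin 3) R) =
      (diagTwist k (u ^ k) : Matrix (Fin 3) (Fin 3) R) * cyclicShift := by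
  have h₁ : u ^ (-1 - k) = (u ^ k) ^ k := by
    rw [← _root_.zpow_mul, show k * k = -1 - k + (1 + k + k ^ 2) by ring, _root_.zpow_add, hu,
      mul_one]
  have h₂ : u = (u ^ k) ^ (-1 - k) := by
    rw [← _root_.zpow_mul, show k * (-1 - k) = 1 - (1 + k + k ^ 2) by ring, _root_.zpow_sub, hu,
      inv_one, mul_one, zpow_one]
  rw [coe_diagTwist, coe_diagTwist, cyclicShift_mul_diagonal, ← h₁, ← h₂]

theorem orderOf_smul_cyclicShift [Nontrivial R] {μ : R} {n : ℕ}
    (hμ : IsPrimitiveRoot μ (3 ^ (n + 1))) :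
    orderOf (μ • cyclicShift : Matrix (Fin 3) (Fin 3) R) = 3 ^ (n + 1) := by
  have : Fact (Nat.Prime 3) := ⟨Nat.prime_three⟩
  have hpow : ∀ j, (μ • cyclicShift : Matrix (Fin 3) (Fin 3) R) ^ (3 * j) = μ ^ (3 * j) • 1 := by
    intro j
    rw [smul_pow, pow_mul cyclicShift, cyclicShift_pow_three, one_pow]
  refine orderOf_eq_prime_pow ?_ (by rw [pow_succ', hpow, ← pow_succ', hμ.pow_eq_one, one_smul])
  cases n with
  | zero =>
    intro h
    simpa [cyclicShift] using congrFun (congrFun h 0) 0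
  | succ n =>
    rw [pow_succ', hpow, smul_one_eq_diagonal, ← diagonal_one, diagonal_eq_diagonal_iff]
    intro h
    have := (hμ.pow_eq_one_iff_dvd _).mp (h 0)
    rw [← pow_succ', Nat.pow_dvd_pow_iff_le_right (by norm_num)] at this
    omega

end Matrix

/-- The group `T_r^{(k)}(m)`, generated by `B_{r,k}` and `E_m` inside `GL(3,ℂ)`,
has order `3^m·r`. -/
theorem T_rk_order (r : ℕ) (hr : 0 < r)
    (hrprime : ∀ p : ℕ, p.Prime → p ∣ r → p % 6 = 1)
    (k : ℤ) (hk : (r : ℤ) ∣ 1 + k + k ^ 2)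
    (m : ℕ) (hm : 0 < m)
    (B Em : GL (Fin 3) ℂ)
    (hB : B.val = Bmatrix r k) (hEm : Em.val = EMmatrix m) :
    Nat.card ↥(Subgroup.closure ({B, Em} : Set (GL (Fin 3) ℂ))) = 3 ^ m * r := by
  obtain ⟨n, rfl⟩ : ∃ n, m = n + 1 := ⟨m - 1, by omega⟩
  have hν := Complex.isPrimitiveRoot_exp r hr.ne'
  set u : ℂˣ := (hν.isUnit hr.ne').unit
  have hu : orderOf u = r := by rw [← orderOf_units, IsUnit.unit_spec, ← hν.eq_orderOf]
  have hBu : B = diagTwist k u := Units.ext <| by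
    rw [hB, Bmatrix, coe_diagTwist]
    simp [u]
  have hBord : orderOf B = r := by rw [hBu, orderOf_diagTwist, hu]
  have hμ : IsPrimitiveRoot (Complex.exp (2 * Real.pi * Complex.I / (3 : ℂ) ^ (n + 1)))
      (3 ^ (n + 1)) := by
    exact_mod_cast Complex.isPrimitiveRoot_exp (3 ^ (n + 1)) (by positivity)
  have hEord : orderOf Em = 3 ^ (n + 1) := by
    rw [← orderOf_units, hEm]
    exact orderOf_smul_cyclicShift hμ
  have hconj : Em * B * Em⁻¹ = B ^ k := by
    rw [mul_inv_eq_iff_eq_mul]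
    apply Units.ext
    rw [Units.val_mul, Units.val_mul, hEm, EMmatrix, hBu, ← map_zpow, smul_mul_assoc,
      mul_smul_comm]
    congr 1
    exact cyclicShift_mul_diagTwist (by rw [← orderOf_dvd_iff_zpow_eq_one, hu]; exact hk)
  have h3 : ¬ 3 ∣ r := fun h => by simpa using hrprime 3 Nat.prime_three h
  have hcop : r.Coprime (3 ^ (n + 1)) :=
    Nat.Coprime.pow_right _ ((Nat.Prime.coprime_iff_not_dvd Nat.prime_three).mpr h3).symm
  rw [Subgroup.natCard_closure_pair_of_conj_eq_zpow (orderOf_pos_iff.mp (hBord ▸ hr)) hconj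
    (hBord ▸ hEord ▸ hcop), hBord, hEord, mul_comm]
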